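/- Let M be a communicating MDP with diameter D. For any pair of distinct states s and s', there exists an integer ℓ_{s,s'} ≤ 2D and a policy π such that Pr[T(s' | M, π, s) = ℓ_{s,s'}] ≥ 1/(4D), i.e., starting from s and following π, the first hitting time of s' equals ℓ_{s,s'} with probability at least 1/(4D). -/

import Mathlib

open scoped ENNReal

/-- A (possibly nonstationary, randomized) policy: at each time `n` and state `s` it plays
a probability distribution over actions. -/
def MDPPolicy (S A : Type*) [Fintype A] : Type _ :=
  {π : ℕ → S → A → ℝ≥0∞ // ∀ n s, ∑ a, π n s a = 1}

/-- `reachDist P π s s' n x` is the probability that, starting at `s` at time `0` and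
following policy `π` in the MDP with transition kernel `P`, the chain is at state `x` at
time `n` without having visited `s'` at any of the times `1, …, n-1`.  In particular
`reachDist P π s s' n s' = Pr[T(s' | M, π, s) = n]`, the probability that the first
hitting time of `s'` equals `n`. -/
noncomputable def reachDist {S A : Type*} [Fintype S] [Fintype A] [DecidableEq S]
    (P : S → A → S → ℝ≥0∞) (π : ℕ → S → A → ℝ≥0∞) (s s' : S) : ℕ → S → ℝ≥0∞
  | 0 => fun x => if x = s then 1 else 0
  | n + 1 => fun x =>
      ∑ y, (if y = s' then 0 else reachDist P π s s' n y) * ∑ a, π n y a * P y a x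

/-- The expected first hitting time `E[T(s' | M, π, s)]`, computed as
`∑_{m ≥ 1} Pr[T ≥ m]` in `ℝ≥0∞` (so it is `∞` when `s'` is not hit almost surely). -/
noncomputable def expHitTime {S A : Type*} [Fintype S] [Fintype A] [DecidableEq S]
    (P : S → A → S → ℝ≥0∞) (π : ℕ → S → A → ℝ≥0∞) (s s' : S) : ℝ≥0∞ :=
  ∑' m : ℕ, (1 - ∑ k ∈ Finset.range (m + 1), reachDist P π s s' k s')

/-- The diameter `D(M) = max_{s ≠ s'} min_π E[T(s' | M, π, s)]` of the MDP with
transition kernel `P`. -/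
noncomputable def mdpDiameter {S A : Type*} [Fintype S] [Fintype A] [DecidableEq S]
    (P : S → A → S → ℝ≥0∞) : ℝ≥0∞ :=
  ⨆ s, ⨆ s', ⨆ (_ : s ≠ s'), ⨅ π : MDPPolicy S A, expHitTime P π.1 s s'

/-- (Lemma 2 of the paper.)  Let `M` be a communicating MDP with
diameter `D`.  For any pair of distinct states `s` and `s'` there exist an integer
`ℓ_{s,s'} ≤ 2D` and a policy `π` such that the first hitting time of `s'` starting from
`s` and following `π` equals `ℓ_{s,s'}` with probability at least `1/(4D)`. -/
theorem exists_exact_hitting_time_high_prob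
    {S A : Type*} [Fintype S] [Fintype A] [DecidableEq S] [Nonempty A]
    (P : S → A → S → ℝ≥0∞) (hP : ∀ s a, ∑ s', P s a s' = 1)
    (D : ℝ≥0∞) (hD : mdpDiameter P = D) (hDfin : D ≠ ⊤) :
    ∀ s s' : S, s ≠ s' →
      ∃ (ℓ : ℕ) (π : MDPPolicy S A),
        (ℓ : ℝ≥0∞) ≤ 2 * D ∧ 1 / (4 * D) ≤ reachDist P π.1 s s' ℓ s' := by
  intro s s' hss
  -- the infimum over policies for this pair is at most D
  have hinf_le : (⨅ π : MDPPolicy S A, expHitTime P π.1 s s') ≤ D := by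
    rw [← hD, mdpDiameter]
    calc (⨅ π : MDPPolicy S A, expHitTime P π.1 s s')
        ≤ ⨆ (_ : s ≠ s'), ⨅ π : MDPPolicy S A, expHitTime P π.1 s s' :=
          le_iSup (fun _ : s ≠ s' => ⨅ π : MDPPolicy S A, expHitTime P π.1 s s') hss
      _ ≤ ⨆ t, ⨆ (_ : s ≠ t), ⨅ π : MDPPolicy S A, expHitTime P π.1 s t :=
          le_iSup (fun t => ⨆ (_ : s ≠ t), ⨅ π : MDPPolicy S A, expHitTime P π.1 s t) s'
      _ ≤ ⨆ u, ⨆ t, ⨆ (_ : u ≠ t), ⨅ π : MDPPolicy S A, expHitTime P π.1 u t :=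
          le_iSup (fun u => ⨆ t, ⨆ (_ : u ≠ t), ⨅ π : MDPPolicy S A, expHitTime P π.1 u t) s
  -- every expected hitting time is at least 1
  have hone_le : ∀ π : MDPPolicy S A, (1 : ℝ≥0∞) ≤ expHitTime P π.1 s s' := by
    intro π
    have h0 : reachDist P π.1 s s' 0 s' = 0 := by
      simp [reachDist, Ne.symm hss]
    have : (1 : ℝ≥0∞) = 1 - ∑ k ∈ Finset.range (0 + 1), reachDist P π.1 s s' k s' := by
      simp [h0]
    exact le_trans (le_of_eq this) (ENNReal.le_tsum 0)
  have hD1 : (1 : ℝ≥0∞) ≤ D := le_trans (le_iInf hone_le) hinf_le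
  have hD0 : D ≠ 0 := by intro h; rw [h] at hD1; exact (not_le.mpr zero_lt_one) hD1
  have h2Dfin : 2 * D ≠ ⊤ := ENNReal.mul_ne_top (by norm_num) hDfin
  set ℓ : ℕ := ⌊(2 * D).toReal⌋₊ with hℓdef
  have hℓle : (ℓ : ℝ≥0∞) ≤ 2 * D := by
    calc (ℓ : ℝ≥0∞) = ENNReal.ofReal (ℓ : ℝ) := (ENNReal.ofReal_natCast ℓ).symm
      _ ≤ ENNReal.ofReal ((2 * D).toReal) :=
          ENNReal.ofReal_le_ofReal (Nat.floor_le ENNReal.toReal_nonneg)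
      _ = 2 * D := ENNReal.ofReal_toReal h2Dfin
  have hℓ1 : 2 * D < (ℓ : ℝ≥0∞) + 1 := by
    have h := Nat.lt_floor_add_one ((2 * D).toReal)
    calc 2 * D = ENNReal.ofReal ((2 * D).toReal) := (ENNReal.ofReal_toReal h2Dfin).symm
      _ < ENNReal.ofReal ((ℓ : ℝ) + 1) := by
          exact (ENNReal.ofReal_lt_ofReal_iff (by positivity)).mpr h
      _ = (ℓ : ℝ≥0∞) + 1 := by
          rw [ENNReal.ofReal_add (by positivity) zero_le_one, ENNReal.ofReal_natCast,
            ENNReal.ofReal_one]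
  -- pick a policy with small expected hitting time
  have hDlt : D < ((ℓ : ℝ≥0∞) + 1) / 2 := by
    rw [ENNReal.lt_div_iff_mul_lt (Or.inl two_ne_zero) (Or.inl ENNReal.ofNat_ne_top)]
    rw [mul_comm]; exact hℓ1
  obtain ⟨π, hπ⟩ : ∃ π : MDPPolicy S A, expHitTime P π.1 s s' < ((ℓ : ℝ≥0∞) + 1) / 2 :=
    iInf_lt_iff.mp (lt_of_le_of_lt hinf_le hDlt)
  set p : ℕ → ℝ≥0∞ := fun k => reachDist P π.1 s s' k s' with hp
  set Sm : ℕ → ℝ≥0∞ := fun m => ∑ k ∈ Finset.range (m + 1), p k with hSm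
  have hSmono : ∀ m ≤ ℓ, Sm m ≤ Sm ℓ := fun m hm =>
    Finset.sum_le_sum_of_subset (Finset.range_subset_range.mpr (by omega))
  -- Markov inequality step
  have hmark : ((ℓ : ℝ≥0∞) + 1) * (1 - Sm ℓ) < ((ℓ : ℝ≥0∞) + 1) / 2 := by
    refine lt_of_le_of_lt ?_ hπ
    calc ((ℓ : ℝ≥0∞) + 1) * (1 - Sm ℓ)
        = ∑ _m ∈ Finset.range (ℓ + 1), (1 - Sm ℓ) := by
          rw [Finset.sum_const, Finset.card_range, nsmul_eq_mul]
          push_cast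
          ring
      _ ≤ ∑ m ∈ Finset.range (ℓ + 1), (1 - Sm m) := by
          refine Finset.sum_le_sum fun m hm => ?_
          exact tsub_le_tsub_left (hSmono m (by simpa using Nat.lt_succ_iff.mp (Finset.mem_range.mp hm))) 1
      _ ≤ expHitTime P π.1 s s' := ENNReal.sum_le_tsum _
  have hsub : 1 - Sm ℓ < 1 / 2 := by
    have hne0 : ((ℓ : ℝ≥0∞) + 1) ≠ 0 := by simp
    have hnetop : ((ℓ : ℝ≥0∞) + 1) ≠ ⊤ := by
      simp [ENNReal.add_ne_top]
    rw [div_eq_mul_inv] at hmark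
    have := (ENNReal.mul_lt_mul_iff_right hne0 hnetop).mp hmark
    simpa [one_div] using this
  have hShalf : 1 / 2 < Sm ℓ := by
    by_contra h
    push_neg at h
    have : (1 : ℝ≥0∞) - 1 / 2 ≤ 1 - Sm ℓ := tsub_le_tsub_left h 1
    rw [ENNReal.sub_half ENNReal.one_ne_top] at this
    exact absurd (lt_of_le_of_lt this hsub) (lt_irrefl _)
  -- pigeonhole
  have hp0 : p 0 = 0 := by simp [hp, reachDist, Ne.symm hss]
  have hℓpos : 0 < ℓ := by
    rcases Nat.eq_zero_or_pos ℓ with h | h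
    · exfalso
      rw [h] at hℓ1
      have h2 : (2 : ℝ≥0∞) ≤ 2 * D := by
        calc (2 : ℝ≥0∞) = 2 * 1 := by norm_num
          _ ≤ 2 * D := mul_le_mul_right hD1 2
      have h3 := lt_of_le_of_lt h2 hℓ1
      norm_num at h3
    · exact h
  have hex : ∃ k ∈ Finset.Ico 1 (ℓ + 1), 1 / (4 * D) ≤ p k := by
    by_contra hcon
    push_neg at hcon
    have hsplit : Sm ℓ = ∑ k ∈ Finset.Ico 1 (ℓ + 1), p k := by
      show ∑ k ∈ Finset.range (ℓ + 1), p k = ∑ k ∈ Finset.Ico 1 (ℓ + 1), p k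
      rw [Finset.range_eq_Ico]
      conv_lhs => rw [Finset.sum_eq_sum_Ico_succ_bot (Nat.succ_pos ℓ) p]
      rw [hp0, zero_add]
    have hsum : Sm ℓ ≤ (ℓ : ℝ≥0∞) * (1 / (4 * D)) := by
      rw [hsplit]
      calc ∑ k ∈ Finset.Ico 1 (ℓ + 1), p k
          ≤ ∑ _k ∈ Finset.Ico 1 (ℓ + 1), 1 / (4 * D) :=
            Finset.sum_le_sum fun k hk => (hcon k hk).le
        _ = (ℓ : ℝ≥0∞) * (1 / (4 * D)) := by
            rw [Finset.sum_const, Nat.card_Ico, nsmul_eq_mul]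
            norm_num
    have h4D0 : (4 : ℝ≥0∞) * D ≠ 0 := by
      simp [hD0]
    have h4Dtop : (4 : ℝ≥0∞) * D ≠ ⊤ := ENNReal.mul_ne_top (by norm_num) hDfin
    have hhalf : (ℓ : ℝ≥0∞) * (1 / (4 * D)) ≤ 1 / 2 := by
      rw [mul_one_div, ENNReal.div_le_iff h4D0 h4Dtop]
      calc (ℓ : ℝ≥0∞) ≤ 2 * D := hℓle
        _ = 1 / 2 * (4 * D) := by
            rw [show (4 : ℝ≥0∞) * D = 2 * (2 * D) by ring, ← mul_assoc]
            rw [one_div, ENNReal.inv_mul_cancel two_ne_zero ENNReal.ofNat_ne_top, one_mul]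
    exact absurd (lt_of_lt_of_le hShalf (le_trans hsum hhalf)) (lt_irrefl _)
  obtain ⟨k, hk, hpk⟩ := hex
  obtain ⟨hk1, hk2⟩ := Finset.mem_Ico.mp hk
  refine ⟨k, π, ?_, hpk⟩
  calc (k : ℝ≥0∞) ≤ (ℓ : ℝ≥0∞) := by exact_mod_cast Nat.lt_succ_iff.mp hk2
    _ ≤ 2 * D := hℓle
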